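/- Let G be a connected graph with at least k+1 vertices. If for every two vertices u and v of G with distance exactly 2 in G there exist k pairwise independent u–v paths (paths sharing no vertices other than u and v), then G is k-connected. -/

import Mathlib

open Finset

variable {V : Type*} [DecidableEq V]

/-- A (finite abstract) simplicial complex: a nonempty, downward closed family of finite
vertex sets (the empty face is always included). -/
def IsComplex (K : Set (Finset V)) : Prop :=
  K.Nonempty ∧ ∀ σ ∈ K, ∀ τ : Finset V, τ ⊆ σ → τ ∈ K

/-- A facet: a face maximal under inclusion. -/
def IsFacet (K : Set (Finset V)) (F : Finset V) : Prop :=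
  F ∈ K ∧ ∀ G ∈ K, F ⊆ G → G = F

/-- PureCplx of dimension `d`: every face is contained in a facet and all facets have `d+1` vertices. -/
def PureCplx (K : Set (Finset V)) (d : ℕ) : Prop :=
  (∀ σ ∈ K, ∃ F, IsFacet K F ∧ σ ⊆ F) ∧ ∀ F, IsFacet K F → F.card = d + 1

def IsVertex (K : Set (Finset V)) (x : V) : Prop := ({x} : Finset V) ∈ K

/-- The 1-skeleton graph of a complex (on the ambient vertex type). -/
def skeleton (K : Set (Finset V)) : SimpleGraph V where
  Adj x y := x ≠ y ∧ ({x, y} : Finset V) ∈ K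
  symm := by
    refine ⟨?_⟩
    intro x y h
    exact ⟨h.1.symm, by rw [Finset.pair_comm]; exact h.2⟩
  loopless := ⟨fun x h => h.1 rfl⟩

/-- A clique of the 1-skeleton of `K`. -/
def IsCliqueIn (K : Set (Finset V)) (T : Finset V) : Prop :=
  ∀ u ∈ T, ∀ v ∈ T, u ≠ v → ({u, v} : Finset V) ∈ K

/-- A critical clique: removing some vertex yields a face. -/
def IsCritical (K : Set (Finset V)) (T : Finset V) : Prop :=
  ∃ v ∈ T, T.erase v ∈ K

/-- `K` contains the boundary complex of a `(d+1)`-simplex as a subcomplex. -/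
def ContainsSimplexBoundary (K : Set (Finset V)) (d : ℕ) : Prop :=
  ∃ S : Finset V, S.card = d + 2 ∧ ∀ τ : Finset V, τ ⊆ S → τ ≠ S → τ ∈ K

/-- Banner (for a pure `d`-complex): every critical `(d+1)`-clique is spanning and no
boundary of a `(d+1)`-simplex occurs as a subcomplex. -/
def Banner (K : Set (Finset V)) (d : ℕ) : Prop :=
  (∀ T : Finset V, IsCliqueIn K T → T.card = d + 1 → IsCritical K T → T ∈ K) ∧
    ¬ ContainsSimplexBoundary K d

/-- Strongly banner: every `(d+1)`-clique is spanning and no boundary of a `(d+1)`-simplex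
occurs as a subcomplex. -/
def StronglyBanner (K : Set (Finset V)) (d : ℕ) : Prop :=
  (∀ T : Finset V, IsCliqueIn K T → T.card = d + 1 → T ∈ K) ∧
    ¬ ContainsSimplexBoundary K d

/-- FlagCplx: every clique of the 1-skeleton is a face. -/
def FlagCplx (K : Set (Finset V)) : Prop :=
  ∀ T : Finset V, IsCliqueIn K T → T ∈ K

/-- The link of a face `σ`. -/
def link (K : Set (Finset V)) (σ : Finset V) : Set (Finset V) :=
  {τ : Finset V | Disjoint τ σ ∧ τ ∪ σ ∈ K}

/-- The facet graph of a pure `d`-complex: facets adjacent when they share a `(d-1)`-face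
(i.e. their intersection has `d` vertices). -/
def facetGraph (K : Set (Finset V)) (d : ℕ) : SimpleGraph {F : Finset V // IsFacet K F} where
  Adj F G := F ≠ G ∧ ((F : Finset V) ∩ (G : Finset V)).card = d
  symm := by
    refine ⟨?_⟩
    intro F G h
    exact ⟨h.1.symm, by rw [Finset.inter_comm]; exact h.2⟩
  loopless := ⟨fun F h => h.1 rfl⟩

/-- Strong connectivity: the facet graph is connected. -/
def StronglyConnected (K : Set (Finset V)) (d : ℕ) : Prop :=
  (facetGraph K d).Connected

/-- A `d`-dimensional pseudomanifold: pure `d`-complex, every `(d-1)`-face is in exactly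
two facets, and the facet graph is connected. -/
def Pseudomanifold (K : Set (Finset V)) (d : ℕ) : Prop :=
  IsComplex K ∧ PureCplx K d ∧
    (∀ σ ∈ K, σ.card = d → {F : Finset V | IsFacet K F ∧ σ ⊆ F}.ncard = 2) ∧
    StronglyConnected K d

/-- Connectivity of a complex: the 1-skeleton induced on its vertex set is connected. -/
def ComplexConnected (K : Set (Finset V)) : Prop :=
  ((skeleton K).induce {x : V | IsVertex K x}).Connected

/-- A normal pseudomanifold: all links of faces of dimension at least one are connected. -/
def NormalPM (K : Set (Finset V)) (d : ℕ) : Prop :=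
  Pseudomanifold K d ∧ ∀ σ ∈ K, σ.card + 1 ≤ d → ComplexConnected (link K σ)

/-- The closed neighborhood `N(x)`: `x` together with its neighbors. -/
def closedNbhd (K : Set (Finset V)) (x : V) : Set V :=
  {x} ∪ {z : V | ({x, z} : Finset V) ∈ K}

/-- The subcomplex induced on a set `A` of vertices. -/
def inducedSub (K : Set (Finset V)) (A : Set V) : Set (Finset V) :=
  {σ ∈ K | ∀ v ∈ σ, v ∈ A}

/-- The antistar of a vertex: the induced subcomplex on all other vertices. -/
def antistar (K : Set (Finset V)) (x : V) : Set (Finset V) :=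
  {σ ∈ K | x ∉ σ}

/-- `K` is the boundary of a triangle, i.e. the 3-cycle `C₃`. -/
def IsC3 (K : Set (Finset V)) : Prop :=
  ∃ a b c : V, a ≠ b ∧ a ≠ c ∧ b ≠ c ∧
    K = {τ : Finset V | τ ⊆ ({a, b, c} : Finset V) ∧ τ ≠ ({a, b, c} : Finset V)}

/-- The banner number of a pure `d`-complex. -/
noncomputable def bannerNumber (K : Set (Finset V)) (d : ℕ) : ℕ :=
  sInf {j : ℕ | ∀ σ ∈ K, σ.card = j → Banner (link K σ) (d - j) ∨ IsC3 (link K σ)}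

/-- `k`-connectivity of a graph: more than `k` vertices, and removing fewer than `k`
vertices leaves it connected. -/
def KConnected {W : Type*} [Fintype W] [DecidableEq W] (G : SimpleGraph W) (k : ℕ) : Prop :=
  k < Fintype.card W ∧
    ∀ S : Finset W, S.card < k → (G.induce ((↑S : Set W)ᶜ)).Connected

/-- Existence of `k` pairwise independent `u`–`v` paths: paths sharing no vertices other
than `u` and `v`. -/
def IndepPaths {W : Type*} (G : SimpleGraph W) (u v : W) (k : ℕ) : Prop :=
  ∃ p : Fin k → G.Walk u v, (∀ i, (p i).IsPath) ∧
    ∀ i j, i ≠ j → ∀ w : W, w ∈ (p i).support → w ∈ (p j).support → w = u ∨ w = v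

/-!
Suppose deleting a set `S` of fewer than `k` vertices disconnects `G`. Among the pairs of
vertices outside `S` that `S` separates, pick `a, b` at minimal distance `d` in `G`; then `d ≥ 2`.
Let `x` be the vertex at distance 2 from `a` on a shortest `a`–`b` path. Every `x`–`a` path has
an interior vertex in `S`: otherwise its vertex `w` next to `x` is joined to `a` outside `S`,
yet `w` is at distance less than `d` from `b`. So the `k` independent `x`–`a` paths meet `S` in
`k` distinct vertices, and `k ≤ |S|`.
-/

lemma IndepPaths.le_card {W : Type*} {G : SimpleGraph W} {u v : W} {k : ℕ} {S : Finset W}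
    (h : IndepPaths G u v k)
    (hS : ∀ p : G.Walk u v, p.IsPath → ∃ x ∈ p.support, x ∈ S ∧ x ≠ u ∧ x ≠ v) :
    k ≤ S.card := by
  obtain ⟨p, hpath, hindep⟩ := h
  choose f hf_support hf_mem hf_ne_u hf_ne_v using fun i => hS (p i) (hpath i)
  have hf_inj : Function.Injective f := fun i j hij => by_contra fun hne =>
    (hindep i j hne (f i) (hf_support i) (hij ▸ hf_support j)).elim (hf_ne_u i) (hf_ne_v i)
  simpa using card_le_card_of_injOn (s := univ) f (fun i _ => hf_mem i) hf_inj.injOn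

namespace SimpleGraph

variable {W : Type*} {G : SimpleGraph W}

lemma exists_dist_eq_of_le_dist {u v : W} {n : ℕ} (hn : n ≤ G.dist u v) :
    ∃ x, G.dist u x = n ∧ G.dist x v + n = G.dist u v := by
  by_cases huv : G.Reachable u v
  · obtain ⟨p, hp⟩ := huv.exists_walk_length_eq_dist
    have hux : G.dist u (p.getVert n) ≤ n := by
      simpa [Walk.take_length, hp, hn] using G.dist_le (p.take n)
    have hxv : G.dist (p.getVert n) v ≤ G.dist u v - n := by
      simpa [Walk.drop_length, hp] using G.dist_le (p.drop n)
    have htri := (p.take n).reachable.dist_triangle_left v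
    exact ⟨p.getVert n, by omega, by omega⟩
  · rw [dist_eq_zero_of_not_reachable huv, Nat.le_zero] at hn
    exact ⟨u, by simp [hn]⟩

lemma Connected.exists_dist_eq_two_separated_of_minimal (hG : G.Connected) {s : Set W} {a b : W}
    (ha : a ∉ s) (hb : b ∉ s) (hab : ¬(G.induce sᶜ).Reachable ⟨a, ha⟩ ⟨b, hb⟩)
    (hmin : ∀ a' b' (ha' : a' ∉ s) (hb' : b' ∉ s),
      G.dist a' b' < G.dist a b → (G.induce sᶜ).Reachable ⟨a', ha'⟩ ⟨b', hb'⟩) :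
    ∃ u v, G.dist u v = 2 ∧
      ∀ p : G.Walk u v, p.IsPath → ∃ x ∈ p.support, x ∈ s ∧ x ≠ u ∧ x ≠ v := by
  have hab_ne : a ≠ b := by rintro rfl; exact hab .rfl
  have hab_nadj : ¬G.Adj a b := fun hadj => hab (induce_adj.2 hadj).reachable
  obtain ⟨x, hax, hxb⟩ :=
    exists_dist_eq_of_le_dist (hG.one_lt_dist_of_ne_of_not_adj hab_ne hab_nadj)
  refine ⟨x, a, by rw [dist_comm, hax], fun p hp => by_contra fun hmeet => ?_⟩
  cases p with
  | nil => simp at hax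
  | @cons _ w _ hxw q =>
    have hxq : x ∉ q.support := ((Walk.cons_isPath_iff hxw q).1 hp).2
    have hq : ∀ y ∈ q.support, y ∉ s := fun y hy hys =>
      hmeet ⟨y, by simp [hy], hys, fun h => hxq (h ▸ hy), fun h => ha (h ▸ hys)⟩
    have hwb : G.dist w b < G.dist a b := by
      have := hG.dist_triangle (u := w) (v := x) (w := b)
      rw [dist_eq_one_iff_adj.2 hxw.symm] at this
      omega
    exact hab ((q.induce sᶜ hq).reachable.symm.trans (hmin w b _ hb hwb))

theorem Connected.exists_dist_eq_two_separated (hG : G.Connected) {s : Set W} {a b : W}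
    (ha : a ∉ s) (hb : b ∉ s) (hab : ¬(G.induce sᶜ).Reachable ⟨a, ha⟩ ⟨b, hb⟩) :
    ∃ u v, G.dist u v = 2 ∧
      ∀ p : G.Walk u v, p.IsPath → ∃ x ∈ p.support, x ∈ s ∧ x ≠ u ∧ x ≠ v := by
  classical
  have hex : ∃ d, ∃ a b, ∃ (ha : a ∉ s) (hb : b ∉ s),
      ¬(G.induce sᶜ).Reachable ⟨a, ha⟩ ⟨b, hb⟩ ∧ G.dist a b = d :=
    ⟨_, a, b, ha, hb, hab, rfl⟩
  obtain ⟨a, b, ha, hb, hab, hd⟩ := Nat.find_spec hex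
  exact hG.exists_dist_eq_two_separated_of_minimal ha hb hab fun a' b' ha' hb' hlt =>
    by_contra fun h => Nat.find_min hex (hd ▸ hlt) ⟨a', b', ha', hb', h, rfl⟩

end SimpleGraph

/-- **Liu's criterion.** If a connected graph with at least `k+1` vertices has `k`
independent paths between any two vertices at distance 2, then it is `k`-connected. -/
theorem liu_criterion {W : Type*} [Fintype W] [DecidableEq W] (G : SimpleGraph W) (k : ℕ)
    (hconn : G.Connected) (hcard : k + 1 ≤ Fintype.card W)
    (hpaths : ∀ u v : W, G.dist u v = 2 → IndepPaths G u v k) :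
    KConnected G k := by
  refine ⟨by omega, fun S hS => ?_⟩
  obtain ⟨x, -, hx⟩ := exists_mem_notMem_of_card_lt_card
    (show S.card < (univ : Finset W).card by rw [card_univ]; omega)
  have : Nonempty ((S : Set W)ᶜ : Set W) := ⟨⟨x, hx⟩⟩
  refine ⟨fun a b => by_contra fun hab => ?_⟩
  obtain ⟨u, v, huv, hmeet⟩ := hconn.exists_dist_eq_two_separated a.2 b.2 hab
  exact hS.not_ge ((hpaths u v huv).le_card hmeet)
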